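/- arXiv:1907.00905 — 2 statements merged into one kernel-verified Lean document; each statement's English description precedes it below -/
import Mathlib

section
/- For distinct natural numbers m ≠ k, the integral over ℝ of H_m(x) · H_k(x) · e^{-x²} dx equals 0. -/
/-!
Integrating `(P e^{-x²})' = (P' - 2xP) e^{-x²}` over `ℝ` gives `∫ (P' - 2xP) e^{-x²} = 0` for every
polynomial `P`. For `P = H_m H_k`, the derivative formula `H_n' = 2n H_{n-1}` and the recurrence
`2x H_k = H_{k+1} + 2k H_{k-1}` turn this into `⟨H_m, H_{k+1}⟩ = 2m ⟨H_{m-1}, H_k⟩` for the Gaussian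
pairing, and iterating lowers `m` to `0`, where the factor `2m` vanishes.
-/

open Polynomial MeasureTheory Real

/-- Physicists' Hermite polynomials: H₀=1, H₁=2x, H_{m+2} = 2x·H_{m+1} − 2(m+1)·H_m. -/
noncomputable def physHermite : ℕ → Polynomial ℝ
  | 0 => 1
  | 1 => Polynomial.C 2 * Polynomial.X
  | (m + 2) => Polynomial.C 2 * Polynomial.X * physHermite (m + 1)
      - Polynomial.C (2 * ((m : ℝ) + 1)) * physHermite m

-- At `n = 0` the truncated `n - 1` is harmless: its coefficient `2n` vanishes.
lemma two_mul_X_mul_physHermite (n : ℕ) :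
    2 * X * physHermite n = physHermite (n + 1) + 2 * (n : ℝ[X]) * physHermite (n - 1) := by
  cases n with
  | zero => simp [physHermite, map_ofNat]
  | succ n =>
    simp only [physHermite, Nat.add_sub_cancel, map_mul, map_add, map_natCast, map_ofNat, map_one,
      Nat.cast_add, Nat.cast_one]
    ring

lemma derivative_physHermite (n : ℕ) :
    derivative (physHermite n) = 2 * (n : ℝ[X]) * physHermite (n - 1) := by
  induction n using Nat.twoStepInduction with
  | zero => simp [physHermite]
  | one => simp [physHermite, map_ofNat]
  | more n ih₁ ih₂ =>
    simp only [physHermite, derivative_sub, derivative_mul, derivative_ofNat, derivative_X,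
      derivative_natCast, derivative_one, ih₁, ih₂, map_mul, map_add, map_natCast, map_ofNat, map_one,
      Nat.add_sub_cancel, show n + 2 - 1 = n + 1 from rfl, Nat.cast_add, Nat.cast_one,
      Nat.cast_ofNat]
    linear_combination (2 * (n + 1) : ℝ[X]) * two_mul_X_mul_physHermite n

lemma integrable_eval_mul_exp_neg_sq (P : ℝ[X]) :
    Integrable fun x : ℝ => P.eval x * exp (-x ^ 2) := by
  induction P using Polynomial.induction_on' with
  | add p q hp hq => simpa [add_mul] using hp.fun_add hq
  | monomial n a =>
    have h := integrable_rpow_mul_exp_neg_mul_sq (b := 1) one_pos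
      (s := n) (neg_one_lt_zero.trans_le (Nat.cast_nonneg n))
    simp_rw [rpow_natCast, neg_mul, one_mul] at h
    simpa [eval_monomial, mul_assoc] using h.const_mul a

noncomputable def gaussIntegral : ℝ[X] →ₗ[ℝ] ℝ where
  toFun P := ∫ x : ℝ, P.eval x * exp (-x ^ 2)
  map_add' P Q := by
    simp only [eval_add, add_mul]
    exact integral_add (integrable_eval_mul_exp_neg_sq P) (integrable_eval_mul_exp_neg_sq Q)
  map_smul' a P := by
    simp only [eval_smul, smul_eq_mul, mul_assoc, integral_const_mul, RingHom.id_apply]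

lemma gaussIntegral_apply (P : ℝ[X]) :
    gaussIntegral P = ∫ x : ℝ, P.eval x * exp (-x ^ 2) := rfl

lemma gaussIntegral_derivative_sub_two_X_mul (P : ℝ[X]) :
    gaussIntegral (derivative P - 2 * X * P) = 0 := by
  refine integral_eq_zero_of_hasDerivAt_of_integrable (f := fun x => P.eval x * exp (-x ^ 2))
    (fun x => ?_) (integrable_eval_mul_exp_neg_sq _) (integrable_eval_mul_exp_neg_sq P)
  have hexp : HasDerivAt (fun x : ℝ => exp (-x ^ 2)) (exp (-x ^ 2) * -(2 * x)) x := by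
    simpa using ((hasDerivAt_pow 2 x).fun_neg).exp
  refine ((P.hasDerivAt x).fun_mul hexp).congr_deriv ?_
  simp only [eval_sub, eval_mul, eval_ofNat, eval_X]
  ring

lemma gaussIntegral_physHermite_mul_physHermite_succ (m k : ℕ) :
    gaussIntegral (physHermite m * physHermite (k + 1))
      = 2 * m * gaussIntegral (physHermite (m - 1) * physHermite k) := by
  have hP : derivative (physHermite m * physHermite k) - 2 * X * (physHermite m * physHermite k)
      = (2 * m : ℝ) • (physHermite (m - 1) * physHermite k)
        - physHermite m * physHermite (k + 1) := by
    rw [derivative_mul, derivative_physHermite, derivative_physHermite, smul_eq_C_mul]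
    simp only [map_mul, map_ofNat, map_natCast]
    linear_combination (-physHermite m) * two_mul_X_mul_physHermite k
  have h := gaussIntegral_derivative_sub_two_X_mul (physHermite m * physHermite k)
  rw [hP, map_sub, map_smul, smul_eq_mul, sub_eq_zero] at h
  exact h.symm

lemma gaussIntegral_physHermite_mul_physHermite_of_lt {m k : ℕ} (hmk : m < k) :
    gaussIntegral (physHermite m * physHermite k) = 0 := by
  obtain ⟨k, rfl⟩ : ∃ j, k = j + 1 := ⟨k - 1, by omega⟩
  rw [gaussIntegral_physHermite_mul_physHermite_succ]
  cases m with
  | zero => simp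
  | succ m =>
    rw [Nat.add_sub_cancel, gaussIntegral_physHermite_mul_physHermite_of_lt (by omega), mul_zero]

theorem stmt4 (m k : ℕ) (hmk : m ≠ k) :
    ∫ x : ℝ, (physHermite m).eval x * (physHermite k).eval x * Real.exp (-x ^ 2) = 0 := by
  simp_rw [← eval_mul, ← gaussIntegral_apply]
  rcases hmk.lt_or_gt with h | h
  · exact gaussIntegral_physHermite_mul_physHermite_of_lt h
  · rw [mul_comm]
    exact gaussIntegral_physHermite_mul_physHermite_of_lt h
end

section
/- Let Θ be a compact topological space and let γ̂ : Θ → ℝⁿ be a continuous map. If Θ is infinite, then for every δ > 0 there exists a continuous map γ : Θ → ℝⁿ with sup_{θ∈Θ} ‖γ(θ) − γ̂(θ)‖ < δ such that γ is constant on some nonempty open subset of Θ. -/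
/-!
Composing `γ₀` with a continuous self-map of `ℝⁿ` that collapses a small ball onto its centre and
moves no point by more than the radius gives the required map: it is constant on the (open,
nonempty) preimage of the ball. The self-map is `v ↦ v - P (v - c)`, where
`P w = (ε / max ε ‖w‖) • w` is the radial retraction onto the closed ball of radius `ε`.
-/

open Metric

section CollapseBall

variable {E : Type*} [NormedAddCommGroup E] [NormedSpace ℝ E]

noncomputable def collapseBall (c : E) (ε : ℝ) (v : E) : E :=
  v - (ε / max ε ‖v - c‖) • (v - c)

theorem continuous_collapseBall (c : E) {ε : ℝ} (hε : 0 < ε) : Continuous (collapseBall c ε) := by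
  unfold collapseBall
  have hpos : ∀ v : E, max ε ‖v - c‖ ≠ 0 := fun v => (hε.trans_le (le_max_left _ _)).ne'
  fun_prop (disch := exact hpos _)

theorem collapseBall_of_mem_ball {c v : E} {ε : ℝ} (hε : 0 < ε) (hv : v ∈ ball c ε) :
    collapseBall c ε v = c := by
  rw [mem_ball, dist_eq_norm] at hv
  simp [collapseBall, max_eq_left hv.le, hε.ne']

theorem norm_collapseBall_sub_le (c v : E) {ε : ℝ} (hε : 0 < ε) :
    ‖collapseBall c ε v - v‖ ≤ ε := by
  have hmax : 0 < max ε ‖v - c‖ := hε.trans_le (le_max_left _ _)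
  calc ‖collapseBall c ε v - v‖ = ε / max ε ‖v - c‖ * ‖v - c‖ := by
        rw [collapseBall, sub_sub_cancel_left, norm_neg, norm_smul, Real.norm_of_nonneg
          (div_nonneg hε.le hmax.le)]
    _ ≤ ε / max ε ‖v - c‖ * max ε ‖v - c‖ := by gcongr; exact le_max_right _ _
    _ = ε := div_mul_cancel₀ _ hmax.ne'

end CollapseBall

theorem stmt18_general (n : ℕ) (Θ : Type*) [TopologicalSpace Θ]
    [Infinite Θ] (γ₀ : Θ → EuclideanSpace ℝ (Fin n)) (hγ₀ : Continuous γ₀) :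
    ∀ δ > (0:ℝ), ∃ γ : Θ → EuclideanSpace ℝ (Fin n), Continuous γ ∧
      (⨆ θ, ‖γ θ - γ₀ θ‖) < δ ∧
      ∃ U : Set Θ, IsOpen U ∧ U.Nonempty ∧ ∃ c, ∀ θ ∈ U, γ θ = c := by
  intro δ hδ
  obtain ⟨θ₀⟩ : Nonempty Θ := inferInstance
  have hε : 0 < δ / 2 := half_pos hδ
  refine ⟨collapseBall (γ₀ θ₀) (δ / 2) ∘ γ₀, (continuous_collapseBall _ hε).comp hγ₀, ?_,
    γ₀ ⁻¹' ball (γ₀ θ₀) (δ / 2), isOpen_ball.preimage hγ₀, ⟨θ₀, mem_ball_self hε⟩, γ₀ θ₀,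
    fun θ hθ => collapseBall_of_mem_ball hε hθ⟩
  calc (⨆ θ, ‖collapseBall (γ₀ θ₀) (δ / 2) (γ₀ θ) - γ₀ θ‖) ≤ δ / 2 :=
        ciSup_le fun θ => norm_collapseBall_sub_le _ _ hε
    _ < δ := half_lt_self hδ

theorem stmt18 (n : ℕ) (Θ : Type*) [TopologicalSpace Θ] [CompactSpace Θ] [T2Space Θ]
    [Infinite Θ] (γ₀ : Θ → EuclideanSpace ℝ (Fin n)) (hγ₀ : Continuous γ₀) :
    ∀ δ > (0:ℝ), ∃ γ : Θ → EuclideanSpace ℝ (Fin n), Continuous γ ∧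
      (⨆ θ, ‖γ θ - γ₀ θ‖) < δ ∧
      ∃ U : Set Θ, IsOpen U ∧ U.Nonempty ∧ ∃ c, ∀ θ ∈ U, γ θ = c :=
  stmt18_general n Θ γ₀ hγ₀
end
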